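/- arXiv:2309.17289 — 6 statements merged into one kernel-verified Lean document; each statement's English description precedes it below -/
import Mathlib

section
/- Let b > 1, c > 0, and 0 < a < b^b c^{b+1}/(b+1)^{b+1}, and let φ₁ ∈ (0, c/(b+1)) and φ₂ ∈ (c/(b+1), c) be the two roots of g(φ) = φ(c − φ)^b − a in (−∞, c). Define V(φ) = −φ²/2 + a/((b−1)(c−φ)^{b−1}) for φ < c. Then V'(φ) = −g(φ)/(c − φ)^b for all φ < c, V attains a strict local maximum at φ₁, and V attains a strict local minimum at φ₂. -/
/-!
Writing `g(φ) = φ (c - φ)^b - a`, the identity `V' = -g / (c - φ)^b` shows that `V'` has the sign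
of `-g`. Since `φ (c - φ)^b` has derivative `(c - φ)^(b-1) (c - (b + 1) φ)`, it increases up to
`c / (b + 1)` and decreases after it, so `g` changes sign from `-` to `+` at `φ₁` and from `+` to
`-` at `φ₂`: the first derivative test gives a strict maximum of `V` at `φ₁` and a strict minimum
at `φ₂`.
-/

open Set Topology

section FirstDerivativeTest

variable {f f' : ℝ → ℝ} {x ε s : ℝ}

theorem lt_of_deriv_pos_of_deriv_neg (hf : ∀ t ∈ Ioo (x - ε) (x + ε), HasDerivAt f (f' t) t)
    (hpos : ∀ t ∈ Ioo (x - ε) x, 0 < f' t) (hneg : ∀ t ∈ Ioo x (x + ε), f' t < 0)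
    (hs : s ≠ x) (hsx : |s - x| < ε) : f s < f x := by
  have hε : 0 < ε := (abs_nonneg _).trans_lt hsx
  obtain ⟨hsl, hsr⟩ := abs_sub_lt_iff.mp hsx
  have hcont : ContinuousOn f (Ioo (x - ε) (x + ε)) := fun t ht =>
    (hf t ht).continuousAt.continuousWithinAt
  rcases hs.lt_or_gt with hlt | hgt
  · have hmono : StrictMonoOn f (Ioc (x - ε) x) :=
      strictMonoOn_of_deriv_pos (convex_Ioc _ _)
        (hcont.mono fun t ht => ⟨ht.1, by linarith [ht.2]⟩) fun t ht => by
          rw [interior_Ioc] at ht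
          rw [(hf t ⟨ht.1, by linarith [ht.2]⟩).deriv]
          exact hpos t ht
    exact hmono ⟨by linarith, hlt.le⟩ ⟨by linarith, le_rfl⟩ hlt
  · have hanti : StrictAntiOn f (Ico x (x + ε)) :=
      strictAntiOn_of_deriv_neg (convex_Ico _ _)
        (hcont.mono fun t ht => ⟨by linarith [ht.1], ht.2⟩) fun t ht => by
          rw [interior_Ico] at ht
          rw [(hf t ⟨by linarith [ht.1], ht.2⟩).deriv]
          exact hneg t ht
    exact hanti ⟨le_rfl, by linarith⟩ ⟨hgt.le, by linarith⟩ hgt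

theorem lt_of_deriv_neg_of_deriv_pos (hf : ∀ t ∈ Ioo (x - ε) (x + ε), HasDerivAt f (f' t) t)
    (hneg : ∀ t ∈ Ioo (x - ε) x, f' t < 0) (hpos : ∀ t ∈ Ioo x (x + ε), 0 < f' t)
    (hs : s ≠ x) (hsx : |s - x| < ε) : f x < f s :=
  neg_lt_neg_iff.mp <| lt_of_deriv_pos_of_deriv_neg (f := fun t => -f t) (f' := fun t => -f' t)
    (fun t ht => (hf t ht).neg) (fun t ht => neg_pos.mpr (hneg t ht))
    (fun t ht => neg_neg_iff_pos.mpr (hpos t ht)) hs hsx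

end FirstDerivativeTest

noncomputable def potential (a b c t : ℝ) : ℝ :=
  -t ^ 2 / 2 + a / ((b - 1) * (c - t) ^ (b - 1))

section Potential

variable {a b c t : ℝ}

theorem hasDerivAt_mul_rpow_sub (ht : t < c) :
    HasDerivAt (fun u : ℝ => u * (c - u) ^ b) ((c - t) ^ (b - 1) * (c - (b + 1) * t)) t := by
  have hct : c - t ≠ 0 := (sub_pos.mpr ht).ne'
  refine ((hasDerivAt_id t).mul
    (((hasDerivAt_id t).const_sub c).rpow_const (p := b) (Or.inl hct))).congr_deriv ?_
  simp only [id_eq]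
  rw [Real.rpow_sub_one hct]
  field_simp
  ring

theorem strictMonoOn_mul_rpow_sub (hb : 0 ≤ b) (hc : 0 ≤ c) :
    StrictMonoOn (fun u : ℝ => u * (c - u) ^ b) (Iio (c / (b + 1))) := by
  have hb1 : 0 < b + 1 := by linarith
  have hlt : ∀ u ∈ Iio (c / (b + 1)), u < c := fun u hu =>
    hu.trans_le (div_le_self hc (by linarith))
  refine strictMonoOn_of_deriv_pos (convex_Iio _)
    (fun u hu => (hasDerivAt_mul_rpow_sub (hlt u hu)).continuousAt.continuousWithinAt)
    fun u hu => ?_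
  rw [interior_Iio] at hu
  rw [(hasDerivAt_mul_rpow_sub (hlt u hu)).deriv]
  have := (lt_div_iff₀ hb1).mp hu
  exact mul_pos (Real.rpow_pos_of_pos (sub_pos.mpr (hlt u hu)) _) (by linarith)

theorem strictAntiOn_mul_rpow_sub (hb : 0 < b + 1) :
    StrictAntiOn (fun u : ℝ => u * (c - u) ^ b) (Ico (c / (b + 1)) c) := by
  refine strictAntiOn_of_deriv_neg (convex_Ico _ _)
    (fun u hu => (hasDerivAt_mul_rpow_sub hu.2).continuousAt.continuousWithinAt)
    fun u hu => ?_
  rw [interior_Ico] at hu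
  rw [(hasDerivAt_mul_rpow_sub hu.2).deriv]
  have := (div_lt_iff₀ hb).mp hu.1
  exact mul_neg_of_pos_of_neg (Real.rpow_pos_of_pos (sub_pos.mpr hu.2) _) (by linarith)

theorem hasDerivAt_potential (hb : b ≠ 1) (ht : t < c) :
    HasDerivAt (potential a b c) (-(t * (c - t) ^ b - a) / (c - t) ^ b) t := by
  have hct : 0 < c - t := sub_pos.mpr ht
  have hb1 : b - 1 ≠ 0 := sub_ne_zero.mpr hb
  have heq : (fun u => -u ^ 2 / 2 + a / (b - 1) * (c - u) ^ (1 - b)) =ᶠ[𝓝 t] potential a b c := by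
    filter_upwards [eventually_lt_nhds ht] with u hu
    rw [potential, show 1 - b = -(b - 1) by ring, Real.rpow_neg (sub_pos.mpr hu).le]
    field_simp
  refine ((((hasDerivAt_pow 2 t).neg.div_const 2).add
    ((((hasDerivAt_id t).const_sub c).rpow_const (p := 1 - b) (Or.inl hct.ne')).const_mul
      (a / (b - 1)))).congr_of_eventuallyEq heq.symm).congr_deriv ?_
  have := (Real.rpow_pos_of_pos hct b).ne'
  simp only [id_eq]
  rw [show 1 - b - 1 = -b by ring, Real.rpow_neg hct.le]
  field_simp
  ring

variable {φ ε s : ℝ}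

theorem potential_lt_of_strictMonoOn (hb : b ≠ 1) (hφ : φ * (c - φ) ^ b = a) (hε : φ + ε ≤ c)
    (hmono : StrictMonoOn (fun u : ℝ => u * (c - u) ^ b) (Ioo (φ - ε) (φ + ε)))
    (hs : s ≠ φ) (hsφ : |s - φ| < ε) : potential a b c s < potential a b c φ := by
  have hε0 : 0 < ε := (abs_nonneg _).trans_lt hsφ
  have hφmem : φ ∈ Ioo (φ - ε) (φ + ε) := ⟨by linarith, by linarith⟩
  refine lt_of_deriv_pos_of_deriv_neg (fun t ht => hasDerivAt_potential hb (ht.2.trans_le hε))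
    (fun t ht => ?_) (fun t ht => ?_) hs hsφ
  · have hlt : t * (c - t) ^ b < a := hφ ▸ hmono ⟨ht.1, by linarith [ht.2]⟩ hφmem ht.2
    exact div_pos (by linarith) (Real.rpow_pos_of_pos (by linarith [ht.2]) _)
  · have hgt : a < t * (c - t) ^ b := hφ ▸ hmono hφmem ⟨by linarith [ht.1], ht.2⟩ ht.1
    exact div_neg_of_neg_of_pos (by linarith) (Real.rpow_pos_of_pos (by linarith [ht.2]) _)

theorem lt_potential_of_strictAntiOn (hb : b ≠ 1) (hφ : φ * (c - φ) ^ b = a) (hε : φ + ε ≤ c)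
    (hanti : StrictAntiOn (fun u : ℝ => u * (c - u) ^ b) (Ioo (φ - ε) (φ + ε)))
    (hs : s ≠ φ) (hsφ : |s - φ| < ε) : potential a b c φ < potential a b c s := by
  have hε0 : 0 < ε := (abs_nonneg _).trans_lt hsφ
  have hφmem : φ ∈ Ioo (φ - ε) (φ + ε) := ⟨by linarith, by linarith⟩
  refine lt_of_deriv_neg_of_deriv_pos (fun t ht => hasDerivAt_potential hb (ht.2.trans_le hε))
    (fun t ht => ?_) (fun t ht => ?_) hs hsφ
  · have hgt : a < t * (c - t) ^ b := hφ ▸ hanti ⟨ht.1, by linarith [ht.2]⟩ hφmem ht.2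
    exact div_neg_of_neg_of_pos (by linarith) (Real.rpow_pos_of_pos (by linarith [ht.2]) _)
  · have hlt : t * (c - t) ^ b < a := hφ ▸ hanti hφmem ⟨by linarith [ht.1], ht.2⟩ ht.1
    exact div_pos (by linarith) (Real.rpow_pos_of_pos (by linarith [ht.2]) _)

end Potential

theorem stmt5_general (b c a : ℝ) (hb : 1 < b)
    (φ₁ φ₂ : ℝ) (h1 : φ₁ ∈ Set.Ioo (0 : ℝ) (c / (b + 1)))
    (h2 : φ₂ ∈ Set.Ioo (c / (b + 1)) c)
    (hr1 : φ₁ * (c - φ₁) ^ b - a = 0) (hr2 : φ₂ * (c - φ₂) ^ b - a = 0) :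
    (∀ s : ℝ, s < c →
      deriv (fun t : ℝ => -t ^ 2 / 2 + a / ((b - 1) * (c - t) ^ (b - 1))) s
        = -(s * (c - s) ^ b - a) / (c - s) ^ b) ∧
    (∃ ε > (0 : ℝ), ∀ s : ℝ, s ≠ φ₁ → |s - φ₁| < ε →
      -s ^ 2 / 2 + a / ((b - 1) * (c - s) ^ (b - 1))
        < -φ₁ ^ 2 / 2 + a / ((b - 1) * (c - φ₁) ^ (b - 1))) ∧
    (∃ ε > (0 : ℝ), ∀ s : ℝ, s ≠ φ₂ → |s - φ₂| < ε →
      -φ₂ ^ 2 / 2 + a / ((b - 1) * (c - φ₂) ^ (b - 1))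
        < -s ^ 2 / 2 + a / ((b - 1) * (c - s) ^ (b - 1))) := by
  have hb1 : 0 < b + 1 := by linarith
  have hc : 0 ≤ c := by
    have := (div_lt_iff₀ hb1).mp (h2.1.trans h2.2)
    nlinarith
  refine ⟨fun s hs => (hasDerivAt_potential hb.ne' hs).deriv, ?_, ?_⟩
  · refine ⟨c / (b + 1) - φ₁, sub_pos.mpr h1.2, fun s hs hsφ => ?_⟩
    refine potential_lt_of_strictMonoOn hb.ne' (sub_eq_zero.mp hr1) ?_ ?_ hs hsφ
    · linarith [h1.2, h2.1, h2.2]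
    · exact (strictMonoOn_mul_rpow_sub (by linarith) hc).mono fun u hu => by
        simp only [mem_Iio]; linarith [hu.2]
  · refine ⟨min (φ₂ - c / (b + 1)) (c - φ₂), lt_min (sub_pos.mpr h2.1) (sub_pos.mpr h2.2),
      fun s hs hsφ => ?_⟩
    have hleft := min_le_left (φ₂ - c / (b + 1)) (c - φ₂)
    have hright := min_le_right (φ₂ - c / (b + 1)) (c - φ₂)
    refine lt_potential_of_strictAntiOn hb.ne' (sub_eq_zero.mp hr2) (by linarith) ?_ hs hsφ
    exact (strictAntiOn_mul_rpow_sub hb1).mono fun u hu => ⟨by linarith [hu.1], by linarith [hu.2]⟩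

/-- With `φ₁ ∈ (0, c/(b+1))` and `φ₂ ∈ (c/(b+1), c)` the two roots of
`g(φ) = φ(c-φ)^b - a` below `c`, the potential `V(φ) = -φ²/2 + a/((b-1)(c-φ)^(b-1))`
satisfies `V' = -g/(c-φ)^b` on `(-∞, c)`, has a strict local maximum at `φ₁`,
and a strict local minimum at `φ₂`. -/
theorem stmt5 (b c a : ℝ) (hb : 1 < b) (hc : 0 < c)
    (ha : 0 < a) (ha' : a < b ^ b * c ^ (b + 1) / (b + 1) ^ (b + 1))
    (φ₁ φ₂ : ℝ) (h1 : φ₁ ∈ Set.Ioo (0 : ℝ) (c / (b + 1)))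
    (h2 : φ₂ ∈ Set.Ioo (c / (b + 1)) c)
    (hr1 : φ₁ * (c - φ₁) ^ b - a = 0) (hr2 : φ₂ * (c - φ₂) ^ b - a = 0) :
    (∀ s : ℝ, s < c →
      deriv (fun t : ℝ => -t ^ 2 / 2 + a / ((b - 1) * (c - t) ^ (b - 1))) s
        = -(s * (c - s) ^ b - a) / (c - s) ^ b) ∧
    (∃ ε > (0 : ℝ), ∀ s : ℝ, s ≠ φ₁ → |s - φ₁| < ε →
      -s ^ 2 / 2 + a / ((b - 1) * (c - s) ^ (b - 1))
        < -φ₁ ^ 2 / 2 + a / ((b - 1) * (c - φ₁) ^ (b - 1))) ∧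
    (∃ ε > (0 : ℝ), ∀ s : ℝ, s ≠ φ₂ → |s - φ₂| < ε →
      -φ₂ ^ 2 / 2 + a / ((b - 1) * (c - φ₂) ^ (b - 1))
        < -s ^ 2 / 2 + a / ((b - 1) * (c - s) ^ (b - 1))) :=
  stmt5_general b c a hb φ₁ φ₂ h1 h2 hr1 hr2
end

section
/- Let b > 1, c ∈ ℝ, a > 0, E ∈ ℝ, and let φ : ℝ → ℝ be a C² function with φ(x) < c for all x ∈ ℝ, satisfying φ − φ'' = a/(c − φ)^b and (1/2)φ'² = E + φ²/2 − a/((b−1)(c−φ)^{b−1}) on ℝ. Define μ(x) = a/(c − φ(x))^b, ω₁ = (b−1)(2E + c²)/(2 a^{1/b}), and ω₂ = (1/2) a^{1/b}(b−1). Then μ is positive and satisfies, for all x ∈ ℝ, the Euler–Lagrange equation 1 − (ω₁/b) μ^{1/b − 1} − (ω₂/b) μ^{−1/b − 1}·((2b+1)μ'²/(b²μ²) − 2μ''/(bμ) − 1) = 0. -/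
/-!
Put `u = c - φ` and `μ = a u^(-b)`. Then `μ' / (bμ) = φ'/u` and
`μ'' / (bμ) = φ''/u + (b+1)(φ'/u)²`, so the bracket of the Euler–Lagrange equation is
`-(φ'² + 2uφ'' + u²)/u²`, while `μ^(1/b) = a^(1/b)/u`. Eliminating `φ'²` by the quadrature and
`φ''` by the profile equation, and using `φ + u = c`, gives
`(b-1)(φ'² + 2uφ'' + u²) = (b-1)(2E + c²) - 2buμ`, after which the equation is an identity.
-/

open Real

/-- The momentum density `μ = a/(c-φ)^b` of a periodic traveling wave profile. -/
noncomputable def momDen (a c b : ℝ) (φ : ℝ → ℝ) : ℝ → ℝ :=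
  fun x => a / (c - φ x) ^ b

lemma hasDerivAt_div_rpow {u : ℝ → ℝ} {u' x : ℝ} (hu : HasDerivAt u u' x) (hx : 0 < u x)
    (a b : ℝ) : HasDerivAt (fun y => a / u y ^ b) (-b * (a / u x ^ b) * u' / u x) x := by
  have hpos : ∀ᶠ y in nhds x, 0 < u y := hu.continuousAt.eventually (lt_mem_nhds hx)
  refine ((hu.rpow_const (p := -b) (Or.inl hx.ne')).const_mul a).congr_of_eventuallyEq
    (hpos.mono fun y hy => by simp only [rpow_neg hy.le, div_eq_mul_inv]) |>.congr_deriv ?_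
  rw [rpow_sub hx, rpow_neg hx.le, rpow_one]
  ring

section momDen

variable {a c b : ℝ} {φ : ℝ → ℝ}

lemma momDen_apply (x : ℝ) : momDen a c b φ x = a / (c - φ x) ^ b := rfl

lemma momDen_pos (ha : 0 < a) (hlt : ∀ x, φ x < c) (x : ℝ) : 0 < momDen a c b φ x :=
  div_pos ha (rpow_pos_of_pos (sub_pos.2 (hlt x)) b)

lemma hasDerivAt_momDen {x : ℝ} (hφ : DifferentiableAt ℝ φ x) (hx : φ x < c) :
    HasDerivAt (momDen a c b φ) (b * momDen a c b φ x * deriv φ x / (c - φ x)) x := by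
  refine (hasDerivAt_div_rpow (hφ.hasDerivAt.const_sub c) (sub_pos.2 hx) a b).congr_deriv ?_
  rw [momDen_apply]
  ring

lemma deriv_momDen (hφ : Differentiable ℝ φ) (hlt : ∀ x, φ x < c) :
    deriv (momDen a c b φ) = fun x => b * momDen a c b φ x * deriv φ x / (c - φ x) :=
  funext fun x => (hasDerivAt_momDen (hφ x) (hlt x)).deriv

lemma deriv_deriv_momDen (hφ : Differentiable ℝ φ) (hlt : ∀ x, φ x < c) {x : ℝ}
    (hφ' : DifferentiableAt ℝ (deriv φ) x) :
    deriv (deriv (momDen a c b φ)) x = b * momDen a c b φ x *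
      (deriv (deriv φ) x / (c - φ x) + (b + 1) * (deriv φ x / (c - φ x)) ^ 2) := by
  have hu : c - φ x ≠ 0 := (sub_pos.2 (hlt x)).ne'
  rw [deriv_momDen hφ hlt]
  refine ((((hasDerivAt_momDen (b := b) (hφ x) (hlt x)).const_mul b).mul hφ'.hasDerivAt).div
    ((hφ x).hasDerivAt.const_sub c) hu).deriv.trans ?_
  simp only [Pi.mul_apply]
  field_simp
  ring

lemma momDen_rpow_inv (ha : 0 < a) (hb : b ≠ 0) {x : ℝ} (hx : φ x < c) :
    momDen a c b φ x ^ (1 / b) = a ^ (1 / b) / (c - φ x) := by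
  have hu := sub_pos.2 hx
  rw [momDen_apply, div_rpow ha.le (rpow_nonneg hu.le b), ← rpow_mul hu.le, mul_one_div_cancel hb,
    rpow_one]

lemma profile_combination_eq (hb : b ≠ 1) {E x : ℝ} (hx : φ x < c)
    (hode : φ x - deriv (deriv φ) x = a / (c - φ x) ^ b)
    (hquad : (1 / 2) * (deriv φ x) ^ 2 = E + (φ x) ^ 2 / 2 - a / ((b - 1) * (c - φ x) ^ (b - 1))) :
    (b - 1) * (deriv φ x ^ 2 + 2 * (c - φ x) * deriv (deriv φ) x + (c - φ x) ^ 2)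
      = (b - 1) * (2 * E + c ^ 2) - 2 * b * (c - φ x) * momDen a c b φ x := by
  have hu := sub_pos.2 hx
  have hb1 : b - 1 ≠ 0 := sub_ne_zero.2 hb
  have hX := (rpow_pos_of_pos hu b).ne'
  rw [rpow_sub_one hu.ne'] at hquad
  rw [momDen_apply]
  field_simp at hode hquad ⊢
  linear_combination hquad - 2 * (b - 1) * (c - φ x) * hode

end momDen

/-- With `ω₁ = (b-1)(2E + c²)/(2a^(1/b))` and `ω₂ = (1/2)a^(1/b)(b-1)`, the momentum
density `μ = a/(c-φ)^b` of a traveling wave profile satisfying the profile ODE and its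
quadrature is positive and satisfies the Euler–Lagrange equation
`1 - (ω₁/b)μ^(1/b-1) - (ω₂/b)μ^(-1/b-1)((2b+1)μ'²/(b²μ²) - 2μ''/(bμ) - 1) = 0`. -/
theorem stmt8 (b c a E : ℝ) (hb : 1 < b) (ha : 0 < a) (φ : ℝ → ℝ)
    (hφ : ContDiff ℝ 2 φ) (hlt : ∀ x : ℝ, φ x < c)
    (hode : ∀ x : ℝ, φ x - deriv (deriv φ) x = a / (c - φ x) ^ b)
    (hquad : ∀ x : ℝ, (1 / 2) * (deriv φ x) ^ 2
        = E + (φ x) ^ 2 / 2 - a / ((b - 1) * (c - φ x) ^ (b - 1))) :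
    (∀ x : ℝ, 0 < momDen a c b φ x) ∧
    (∀ x : ℝ,
      1 - ((b - 1) * (2 * E + c ^ 2) / (2 * a ^ (1 / b)) / b)
            * (momDen a c b φ x) ^ (1 / b - 1)
        - ((1 / 2) * a ^ (1 / b) * (b - 1) / b)
            * (momDen a c b φ x) ^ (-(1 / b) - 1)
            * ((2 * b + 1) * (deriv (momDen a c b φ) x) ^ 2
                  / (b ^ 2 * (momDen a c b φ x) ^ 2)
                - 2 * deriv (deriv (momDen a c b φ)) x / (b * momDen a c b φ x)
                - 1) = 0) := by
  have hb0 : b ≠ 0 := by positivity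
  have hdiff : Differentiable ℝ φ := hφ.differentiable (by norm_num)
  refine ⟨momDen_pos ha hlt, fun x => ?_⟩
  have hu := sub_pos.2 (hlt x)
  have hm := momDen_pos (b := b) ha hlt x
  have hA := rpow_pos_of_pos ha (1 / b)
  have hP := profile_combination_eq hb.ne' (hlt x) (hode x) (hquad x)
  rw [deriv_deriv_momDen hdiff hlt (hφ.differentiable_deriv_two x), deriv_momDen hdiff hlt,
    rpow_sub_one hm.ne', rpow_sub_one hm.ne', rpow_neg hm.le, momDen_rpow_inv ha hb0 (hlt x)]
  field_simp
  linear_combination hP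
end

section
/- Let b > 1, T > 0, and let u : ℝ × ℝ → ℝ be smooth and T-periodic in x. Define m = u − u_xx, assume m(x,t) > 0 for all (x,t), and suppose m_t + u m_x + b m u_x = 0 everywhere. Then the function t ↦ ∫₀^T m(x,t)^{1/b} dx is constant. -/
open Real

/-- The momentum density `m = u - u_xx` of a time-dependent field `u`. -/
noncomputable def momField (u : ℝ → ℝ → ℝ) : ℝ → ℝ → ℝ :=
  fun x t => u x t - deriv (deriv (fun y => u y t)) x
/-!
With `ρ = m^(1/b)` the equation becomes the local conservation law `ρ_t + (u ρ)_x = 0`: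
indeed `ρ_t = (1/b) m^(1/b - 1) m_t = -(1/b) m^(1/b - 1) (u m_x + b m u_x) = -(u_x ρ + u ρ_x)`.
Integrating over a period, the flux `u ρ` contributes nothing, so differentiating under the
integral sign gives `d/dt ∫₀ᵀ ρ dx = 0`.
-/

open Function Set

variable {E : Type*} [NormedAddCommGroup E] [NormedSpace ℝ E]

theorem Function.Periodic.deriv {f : ℝ → E} {T : ℝ} (hf : Periodic f T) : Periodic (deriv f) T :=
  fun x => by rw [← deriv_comp_add_const, hf.funext]

section PartialDerivatives

variable {f : ℝ → ℝ → E}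

theorem ContDiff.uncurry_deriv_fst {m n : WithTop ℕ∞} (hf : ContDiff ℝ n (uncurry f))
    (hmn : m + 1 ≤ n) : ContDiff ℝ m (uncurry fun x t => deriv (fun y => f y t) x) := by
  simp_rw [← fderiv_apply_one_eq_deriv]
  exact ContDiff.fderiv_apply (f := fun (p : ℝ × ℝ) y => f y p.2)
    (hf.comp (contDiff_snd.prodMk (contDiff_snd.comp contDiff_fst))) contDiff_fst contDiff_const
    hmn

theorem ContDiff.uncurry_deriv_snd {m n : WithTop ℕ∞} (hf : ContDiff ℝ n (uncurry f))
    (hmn : m + 1 ≤ n) : ContDiff ℝ m (uncurry fun x t => deriv (fun s => f x s) t) := by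
  simp_rw [← fderiv_apply_one_eq_deriv]
  exact ContDiff.fderiv_apply (f := fun (p : ℝ × ℝ) s => f p.1 s)
    (hf.comp ((contDiff_fst.comp contDiff_fst).prodMk contDiff_snd)) contDiff_snd contDiff_const
    hmn

theorem Differentiable.uncurry_right (t : ℝ) (hf : Differentiable ℝ (uncurry f)) :
    Differentiable ℝ fun x => f x t :=
  fun x => (hf _).comp x (differentiableAt_id.prodMk (differentiableAt_const t))

theorem Differentiable.uncurry_left (x : ℝ) (hf : Differentiable ℝ (uncurry f)) :
    Differentiable ℝ (f x) :=
  fun t => (hf _).comp t ((differentiableAt_const x).prodMk differentiableAt_id)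

end PartialDerivatives

theorem intervalIntegral.hasDerivAt_integral_of_continuous_deriv {F F' : ℝ → ℝ → E}
    {a b t₀ : ℝ} (hF : Continuous (uncurry F)) (hF' : Continuous (uncurry F'))
    (hF_deriv : ∀ x t, HasDerivAt (fun s => F x s) (F' x t) t) :
    HasDerivAt (fun t => ∫ x in a..b, F x t) (∫ x in a..b, F' x t₀) t₀ := by
  obtain ⟨C, hC⟩ := (isCompact_uIcc.prod (isCompact_closedBall t₀ 1)).exists_bound_of_continuousOn
    hF'.continuousOn
  refine (intervalIntegral.hasDerivAt_integral_of_dominated_loc_of_deriv_le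
    (F := fun t x => F x t) (F' := fun t x => F' x t) (bound := fun _ => C)
    (Metric.ball_mem_nhds t₀ one_pos)
    (.of_forall fun t => (hF.uncurry_right t).aestronglyMeasurable)
    ((hF.uncurry_right t₀).intervalIntegrable a b) (hF'.uncurry_right t₀).aestronglyMeasurable
    (.of_forall fun x hx t ht => hC (x, t) ⟨uIoc_subset_uIcc hx, Metric.ball_subset_closedBall ht⟩)
    (intervalIntegrable_const (μ := MeasureTheory.volume))
    (.of_forall fun x _ t _ => hF_deriv x t)).2

theorem intervalIntegral_eq_of_conservation_law {ρ ρ' J : ℝ → ℝ → ℝ} {a b : ℝ}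
    (hρ : Continuous (uncurry ρ)) (hρ' : Continuous (uncurry ρ'))
    (hρ_deriv : ∀ x t, HasDerivAt (fun s => ρ x s) (ρ' x t) t)
    (hJ_deriv : ∀ x t, HasDerivAt (fun y => J y t) (-ρ' x t) x) (hJ : ∀ t, J a t = J b t)
    (t s : ℝ) : ∫ x in a..b, ρ x t = ∫ x in a..b, ρ x s := by
  have hρ'_integral (t : ℝ) : ∫ x in a..b, ρ' x t = 0 := by
    rw [← neg_eq_zero, ← intervalIntegral.integral_neg,
      intervalIntegral.integral_eq_sub_of_hasDerivAt (fun x _ => hJ_deriv x t)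
        ((hρ'.uncurry_right t).neg.intervalIntegrable a b), hJ, sub_self]
  have hderiv (t : ℝ) : HasDerivAt (fun t => ∫ x in a..b, ρ x t) 0 t := by
    simpa only [hρ'_integral] using
      intervalIntegral.hasDerivAt_integral_of_continuous_deriv (a := a) (b := b) (t₀ := t) hρ hρ'
        hρ_deriv
  exact is_const_of_deriv_eq_zero (fun t => (hderiv t).differentiableAt)
    (fun t => (hderiv t).deriv) t s

theorem contDiff_momField {u : ℝ → ℝ → ℝ} (hu : ContDiff ℝ (⊤ : ℕ∞) (uncurry u)) :
    ContDiff ℝ (⊤ : ℕ∞) (uncurry (momField u)) :=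
  hu.sub ((hu.uncurry_deriv_fst (m := (⊤ : ℕ∞)) (by simp)).uncurry_deriv_fst (by simp))

theorem momField_periodic {u : ℝ → ℝ → ℝ} {T : ℝ} (hper : ∀ x t, u (x + T) t = u x t) (t : ℝ) :
    Periodic (fun x => momField u x t) T := by
  intro x
  have hu : Periodic (fun y => u y t) T := fun y => hper y t
  simp only [momField, hper, hu.deriv.deriv x]

theorem hasDerivAt_mul_rpow_one_div_of_transport {b : ℝ} (hb : b ≠ 0) {u m : ℝ → ℝ}
    {x u' m' mt : ℝ} (hu : HasDerivAt u u' x) (hm : HasDerivAt m m' x) (hpos : 0 < m x)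
    (heq : mt + u x * m' + b * m x * u' = 0) :
    HasDerivAt (fun y => u y * m y ^ (1 / b)) (-(mt * (1 / b) * m x ^ (1 / b - 1))) x := by
  refine (hu.mul (hm.rpow_const (p := 1 / b) (Or.inl hpos.ne'))).congr_deriv ?_
  rw [show mt = -(u x * m' + b * m x * u') by linarith, rpow_sub_one hpos.ne']
  field_simp
  ring

theorem stmt11_general (b T : ℝ) (hb : 1 < b) (u : ℝ → ℝ → ℝ)
    (hu : ContDiff ℝ (⊤ : ℕ∞) (Function.uncurry u))
    (hper : ∀ x t : ℝ, u (x + T) t = u x t)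
    (hpos : ∀ x t : ℝ, 0 < momField u x t)
    (heq : ∀ x t : ℝ,
      deriv (fun s => momField u x s) t
        + u x t * deriv (fun y => momField u y t) x
        + b * momField u x t * deriv (fun y => u y t) x = 0) :
    ∃ k : ℝ, ∀ t : ℝ, (∫ x in (0:ℝ)..T, (momField u x t) ^ (1 / b)) = k := by
  set m := momField u
  have hm := contDiff_momField hu
  have hm_diff : Differentiable ℝ (uncurry m) := hm.differentiable (by simp)
  have hu_diff : Differentiable ℝ (uncurry u) := hu.differentiable (by simp)
  have hm_ne (q : ℝ × ℝ) : uncurry m q ≠ 0 := (hpos q.1 q.2).ne'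
  have hρ : Continuous (uncurry fun x t => m x t ^ (1 / b)) :=
    hm.continuous.rpow_const fun q => .inl (hm_ne q)
  have hρ' : Continuous
      (uncurry fun x t => deriv (fun s => m x s) t * (1 / b) * m x t ^ (1 / b - 1)) :=
    ((hm.uncurry_deriv_snd (m := 0) (by simp)).continuous.mul continuous_const).mul
      (hm.continuous.rpow_const fun q => .inl (hm_ne q))
  have hρ_deriv (x t : ℝ) := (hm_diff.uncurry_left x t).hasDerivAt.rpow_const
    (p := 1 / b) (.inl (hpos x t).ne')
  have hflux_deriv (x t : ℝ) := hasDerivAt_mul_rpow_one_div_of_transport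
    (zero_lt_one.trans hb).ne'
    (hu_diff.uncurry_right t x).hasDerivAt
    (hm_diff.uncurry_right t x).hasDerivAt (hpos x t) (heq x t)
  have hflux_per (t : ℝ) : u 0 t * m 0 t ^ (1 / b) = u T t * m T t ^ (1 / b) := by
    have hu_per : u T t = u 0 t := by simpa using hper 0 t
    have hm_per : m T t = m 0 t := by simpa using momField_periodic hper t 0
    rw [hu_per, hm_per]
  exact ⟨_, fun t => intervalIntegral_eq_of_conservation_law hρ hρ' hρ_deriv hflux_deriv
    hflux_per t 0⟩

/-- Conservation of `F₁(m) = ∫₀ᵀ m^(1/b) dx` along the b-family Camassa–Holm flow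
in momentum-density form `m_t + u m_x + b m u_x = 0`, for `u` smooth, `T`-periodic
in `x`, with strictly positive momentum density. -/
theorem stmt11 (b T : ℝ) (hb : 1 < b) (hT : 0 < T) (u : ℝ → ℝ → ℝ)
    (hu : ContDiff ℝ (⊤ : ℕ∞) (Function.uncurry u))
    (hper : ∀ x t : ℝ, u (x + T) t = u x t)
    (hpos : ∀ x t : ℝ, 0 < momField u x t)
    (heq : ∀ x t : ℝ,
      deriv (fun s => momField u x s) t
        + u x t * deriv (fun y => momField u y t) x
        + b * momField u x t * deriv (fun y => u y t) x = 0) :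
    ∃ k : ℝ, ∀ t : ℝ, (∫ x in (0:ℝ)..T, (momField u x t) ^ (1 / b)) = k :=
  stmt11_general b T hb u hu hper hpos heq
end

section
/- Let b > 1, T > 0, and let u : ℝ × ℝ → ℝ be smooth and T-periodic in x. Define m = u − u_xx, assume m(x,t) > 0 for all (x,t), and suppose m_t + u m_x + b m u_x = 0 everywhere. Then the function t ↦ ∫₀^T (m_x(x,t)²/(b² m(x,t)²) + 1)·m(x,t)^{−1/b} dx is constant. -/
/-!
Put `w = m^(-1/b)`. Since `m^p` solves the b-family equation with `b` replaced by `p b`, `w` solves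
it with `b = -1`, i.e. `w_t = u_x w - u w_x`, and `u_xx = u - m = u - w^(-b)`. The integrand of
`F₂` is `w_x²/w + w`, and these two relations turn its time derivative into the exact
`x`-derivative of `G = -u w_x²/w + u w + 2/(b-1) w^(1-b)`. By periodicity the flux `G` contributes
nothing to the integral over a period, so differentiating under the integral sign gives
`d/dt F₂ = 0`.
-/

open Real

open Function
open scoped ContDiff

noncomputable def partialX (f : ℝ → ℝ → ℝ) : ℝ → ℝ → ℝ :=
  fun x t => deriv (fun y => f y t) x

noncomputable def partialT (f : ℝ → ℝ → ℝ) : ℝ → ℝ → ℝ :=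
  fun x t => deriv (f x) t

section PartialDerivatives

variable {f : ℝ → ℝ → ℝ}

theorem hasDerivAt_fderiv_apply_one_zero {x t : ℝ}
    (hf : DifferentiableAt ℝ (uncurry f) (x, t)) :
    HasDerivAt (fun y => f y t) (fderiv ℝ (uncurry f) (x, t) (1, 0)) x := by
  have hsection : HasDerivAt (fun y : ℝ => (y, t)) (1, 0) x :=
    (hasDerivAt_id x).prodMk (hasDerivAt_const x t)
  exact hf.hasFDerivAt.comp_hasDerivAt x hsection

theorem hasDerivAt_fderiv_apply_zero_one {x t : ℝ}
    (hf : DifferentiableAt ℝ (uncurry f) (x, t)) :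
    HasDerivAt (f x) (fderiv ℝ (uncurry f) (x, t) (0, 1)) t := by
  have hsection : HasDerivAt (fun s : ℝ => (x, s)) (0, 1) t :=
    (hasDerivAt_const t x).prodMk (hasDerivAt_id t)
  exact hf.hasFDerivAt.comp_hasDerivAt t hsection

theorem partialX_eq_fderiv {x t : ℝ} (hf : DifferentiableAt ℝ (uncurry f) (x, t)) :
    partialX f x t = fderiv ℝ (uncurry f) (x, t) (1, 0) :=
  (hasDerivAt_fderiv_apply_one_zero hf).deriv

theorem partialT_eq_fderiv {x t : ℝ} (hf : DifferentiableAt ℝ (uncurry f) (x, t)) :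
    partialT f x t = fderiv ℝ (uncurry f) (x, t) (0, 1) :=
  (hasDerivAt_fderiv_apply_zero_one hf).deriv

theorem hasDerivAt_partialX {x t : ℝ} (hf : DifferentiableAt ℝ (uncurry f) (x, t)) :
    HasDerivAt (fun y => f y t) (partialX f x t) x :=
  partialX_eq_fderiv hf ▸ hasDerivAt_fderiv_apply_one_zero hf

theorem hasDerivAt_partialT {x t : ℝ} (hf : DifferentiableAt ℝ (uncurry f) (x, t)) :
    HasDerivAt (f x) (partialT f x t) t :=
  partialT_eq_fderiv hf ▸ hasDerivAt_fderiv_apply_zero_one hf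

theorem ContDiff.partialX {m n : WithTop ℕ∞} (hf : ContDiff ℝ n (uncurry f))
    (hmn : m + 1 ≤ n) :
    ContDiff ℝ m (uncurry (partialX f)) := by
  have hd : Differentiable ℝ (uncurry f) :=
    (hf.of_le (le_add_self.trans hmn)).differentiable one_ne_zero
  convert (hf.fderiv_right hmn).clm_apply contDiff_const
  exact partialX_eq_fderiv (hd _)

theorem ContDiff.partialT {m n : WithTop ℕ∞} (hf : ContDiff ℝ n (uncurry f))
    (hmn : m + 1 ≤ n) :
    ContDiff ℝ m (uncurry (partialT f)) := by
  have hd : Differentiable ℝ (uncurry f) :=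
    (hf.of_le (le_add_self.trans hmn)).differentiable one_ne_zero
  convert (hf.fderiv_right hmn).clm_apply contDiff_const
  exact partialT_eq_fderiv (hd _)

theorem partialX_partialT_comm (hf : ContDiff ℝ 2 (uncurry f)) :
    partialX (partialT f) = partialT (partialX f) := by
  ext x t
  have hd : Differentiable ℝ (uncurry f) := hf.differentiable two_ne_zero
  have hd' : DifferentiableAt ℝ (fderiv ℝ (uncurry f)) (x, t) :=
    (hf.fderiv_right (m := 1) le_rfl).differentiable one_ne_zero _
  have hsecond : ∀ v w : ℝ × ℝ, fderiv ℝ (fun p => fderiv ℝ (uncurry f) p v) (x, t) w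
      = fderiv ℝ (fderiv ℝ (uncurry f)) (x, t) w v := fun v w => by
    simp [fderiv_clm_apply hd' (differentiableAt_const v)]
  have hX : uncurry (partialX f) = fun p => fderiv ℝ (uncurry f) p (1, 0) :=
    funext fun p => partialX_eq_fderiv (hd p)
  have hT : uncurry (partialT f) = fun p => fderiv ℝ (uncurry f) p (0, 1) :=
    funext fun p => partialT_eq_fderiv (hd p)
  rw [partialX_eq_fderiv ((hf.partialT (m := 1) le_rfl).differentiable one_ne_zero _),
    partialT_eq_fderiv ((hf.partialX (m := 1) le_rfl).differentiable one_ne_zero _), hX, hT,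
    hsecond, hsecond]
  exact (hf.contDiffAt.isSymmSndFDerivAt (by simp)) _ _

theorem partialX_add_period {T : ℝ} (hf : ∀ x t, f (x + T) t = f x t) (x t : ℝ) :
    partialX f (x + T) t = partialX f x t := by
  simp only [partialX, ← deriv_comp_add_const, hf]

theorem intervalIntegral_partialX (hf : ContDiff ℝ 1 (uncurry f)) (a b t : ℝ) :
    ∫ x in a..b, partialX f x t = f b t - f a t :=
  intervalIntegral.integral_deriv_eq_sub
    (fun x _ => (hasDerivAt_partialX (hf.differentiable one_ne_zero _)).differentiableAt)
    (((hf.partialX (m := 0) (by simp)).continuous.comp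
      (continuous_id.prodMk continuous_const)).intervalIntegrable a b)

end PartialDerivatives

section ParametricIntegral

variable {f : ℝ → ℝ → ℝ}

theorem hasDerivAt_intervalIntegral_of_contDiff (hf : ContDiff ℝ 1 (uncurry f)) (a b t₀ : ℝ) :
    HasDerivAt (fun t => ∫ x in a..b, f x t) (∫ x in a..b, partialT f x t₀) t₀ := by
  have hft : Continuous (uncurry (partialT f)) := (hf.partialT (m := 0) (by simp)).continuous
  have hsection : ∀ {g : ℝ → ℝ → ℝ}, Continuous (uncurry g) → ∀ t,
      Continuous fun x => g x t :=
    fun hg t => hg.comp (continuous_id.prodMk continuous_const)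
  -- a bound for `∂ₜ f` on the compact box `[a, b] × closedBall t₀ 1` dominates the derivative
  obtain ⟨C, hC⟩ :=
    (isCompact_uIcc.prod (isCompact_closedBall t₀ 1)).exists_bound_of_continuousOn
      hft.continuousOn
  refine (intervalIntegral.hasDerivAt_integral_of_dominated_loc_of_deriv_le
    (F := fun t x => f x t) (F' := fun t x => partialT f x t) (bound := fun _ => C)
    (μ := MeasureTheory.volume) (Metric.ball_mem_nhds t₀ one_pos)
    (.of_forall fun t => (hsection hf.continuous t).aestronglyMeasurable)
    ((hsection hf.continuous t₀).intervalIntegrable a b)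
    (hsection hft t₀).aestronglyMeasurable
    (MeasureTheory.ae_of_all _ fun x hx t ht =>
      hC (x, t) ⟨Set.uIoc_subset_uIcc hx, Metric.ball_subset_closedBall ht⟩)
    intervalIntegrable_const
    (MeasureTheory.ae_of_all _ fun x _ t _ =>
      hasDerivAt_partialT (hf.differentiable one_ne_zero _))).2

theorem exists_intervalIntegral_eq_of_partialT_eq_partialX {F G : ℝ → ℝ → ℝ} {a b : ℝ}
    (hF : ContDiff ℝ 1 (uncurry F)) (hG : ContDiff ℝ 1 (uncurry G))
    (hFG : partialT F = partialX G) (hab : ∀ t, G a t = G b t) :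
    ∃ k, ∀ t, ∫ x in a..b, F x t = k := by
  have hderiv : ∀ t, HasDerivAt (fun t => ∫ x in a..b, F x t) 0 t := fun t => by
    simpa [hFG, intervalIntegral_partialX hG, hab] using
      hasDerivAt_intervalIntegral_of_contDiff hF a b t
  exact ⟨_, fun t => is_const_of_deriv_eq_zero (fun s => (hderiv s).differentiableAt)
    (fun s => (hderiv s).deriv) t 0⟩

end ParametricIntegral

def SolvesBFamilyEq (b : ℝ) (u m : ℝ → ℝ → ℝ) : Prop :=
  ∀ x t, partialT m x t + u x t * partialX m x t + b * m x t * partialX u x t = 0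

theorem SolvesBFamilyEq.rpow {b : ℝ} {u m : ℝ → ℝ → ℝ} (h : SolvesBFamilyEq b u m)
    (hm : Differentiable ℝ (uncurry m)) (hm0 : ∀ x t, m x t ≠ 0) (p : ℝ) :
    SolvesBFamilyEq (p * b) u fun x t => m x t ^ p := by
  intro x t
  beta_reduce
  rw [partialX, ((hasDerivAt_partialX (hm (x, t))).rpow_const (p := p) (.inl (hm0 x t))).deriv,
    partialT, ((hasDerivAt_partialT (hm (x, t))).rpow_const (p := p) (.inl (hm0 x t))).deriv,
    ← div_mul_cancel₀ (m x t ^ p) (hm0 x t), ← rpow_sub_one (hm0 x t)]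
  linear_combination p * m x t ^ (p - 1) * h x t

noncomputable def f2Density (w : ℝ → ℝ → ℝ) : ℝ → ℝ → ℝ :=
  fun x t => partialX w x t ^ 2 / w x t + w x t

noncomputable def f2Flux (b : ℝ) (u w : ℝ → ℝ → ℝ) : ℝ → ℝ → ℝ :=
  fun x t => -(u x t * partialX w x t ^ 2 / w x t) + u x t * w x t
    + 2 / (b - 1) * w x t ^ (1 - b)

section ConservationLaw

variable {b : ℝ} {u w : ℝ → ℝ → ℝ}

theorem SolvesBFamilyEq.partialT_eq (h : SolvesBFamilyEq (-1) u w) :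
    partialT w = fun x t => partialX u x t * w x t - u x t * partialX w x t := by
  ext x t
  linear_combination h x t

theorem SolvesBFamilyEq.partialT_partialX (h : SolvesBFamilyEq (-1) u w)
    (hu : ContDiff ℝ 2 (uncurry u)) (hw : ContDiff ℝ 2 (uncurry w)) (x t : ℝ) :
    partialT (partialX w) x t
      = partialX (partialX u) x t * w x t - u x t * partialX (partialX w) x t := by
  have hd : ∀ {f : ℝ → ℝ → ℝ}, ContDiff ℝ 2 (uncurry f) →
      DifferentiableAt ℝ (uncurry f) (x, t) ∧
        DifferentiableAt ℝ (uncurry (partialX f)) (x, t) :=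
    fun hf => ⟨hf.differentiable two_ne_zero _,
      (hf.partialX (m := 1) le_rfl).differentiable one_ne_zero _⟩
  rw [← partialX_partialT_comm hw, h.partialT_eq, partialX,
    (((hasDerivAt_partialX (hd hu).2).fun_mul (hasDerivAt_partialX (hd hw).1)).fun_sub
      ((hasDerivAt_partialX (hd hu).1).fun_mul (hasDerivAt_partialX (hd hw).2))).deriv]
  ring

theorem partialT_f2Density_eq_partialX_f2Flux (hb : b ≠ 1) (hu : ContDiff ℝ 2 (uncurry u))
    (hw : ContDiff ℝ 2 (uncurry w)) (hw0 : ∀ x t, w x t ≠ 0) (h : SolvesBFamilyEq (-1) u w)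
    (huxx : ∀ x t, partialX (partialX u) x t = u x t - w x t ^ (-b)) :
    partialT (f2Density w) = partialX (f2Flux b u w) := by
  ext x t
  have hb1 : b - 1 ≠ 0 := sub_ne_zero.mpr hb
  have hwxt : w x t ≠ 0 := hw0 x t
  have hd : DifferentiableAt ℝ (uncurry w) (x, t) := hw.differentiable two_ne_zero _
  have hdx : DifferentiableAt ℝ (uncurry (partialX w)) (x, t) :=
    (hw.partialX (m := 1) le_rfl).differentiable one_ne_zero _
  have hDensity : HasDerivAt (f2Density w x) _ t :=
    (((hasDerivAt_partialT hdx).fun_pow 2).fun_div (hasDerivAt_partialT hd) hwxt).fun_add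
      (hasDerivAt_partialT hd)
  have hu' := hasDerivAt_partialX (hu.differentiable two_ne_zero (x, t))
  have hw' := hasDerivAt_partialX hd
  have hFlux : HasDerivAt (fun y => f2Flux b u w y t) _ x :=
    ((((hu'.fun_mul ((hasDerivAt_partialX hdx).fun_pow 2)).fun_div hw' hwxt).fun_neg).fun_add
      (hu'.fun_mul hw')).fun_add ((hw'.rpow_const (p := 1 - b) (.inl hwxt)).const_mul (2 / (b - 1)))
  rw [show partialT (f2Density w) x t = _ from hDensity.deriv,
    show partialX (f2Flux b u w) x t = _ from hFlux.deriv, h.partialT_partialX hu hw,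
    h.partialT_eq,
    show (1 : ℝ) - b - 1 = -b by ring, huxx]
  field_simp
  ring

end ConservationLaw

section Regularity

variable {b : ℝ} {u w : ℝ → ℝ → ℝ} {m n : WithTop ℕ∞}

theorem ContDiff.f2Density (hw : ContDiff ℝ n (uncurry w)) (hmn : m + 1 ≤ n)
    (hw0 : ∀ x t, w x t ≠ 0) : ContDiff ℝ m (uncurry (f2Density w)) := by
  have hw' : ContDiff ℝ m (uncurry w) := hw.of_le (le_self_add.trans hmn)
  exact (((hw.partialX hmn).pow 2).div hw' fun p => hw0 p.1 p.2).add hw'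

theorem ContDiff.f2Flux (hu : ContDiff ℝ m (uncurry u)) (hw : ContDiff ℝ n (uncurry w))
    (hmn : m + 1 ≤ n) (hw0 : ∀ x t, w x t ≠ 0) : ContDiff ℝ m (uncurry (f2Flux b u w)) := by
  have hw' : ContDiff ℝ m (uncurry w) := hw.of_le (le_self_add.trans hmn)
  exact (((hu.mul ((hw.partialX hmn).pow 2)).div hw' fun p => hw0 p.1 p.2).neg.add
    (hu.mul hw')).add (contDiff_const.mul (hw'.rpow_const_of_ne fun p => hw0 p.1 p.2))

theorem ContDiff.momField (hu : ContDiff ℝ n (uncurry u)) (hmn : m + 2 ≤ n) :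
    ContDiff ℝ m (uncurry (momField u)) :=
  (hu.of_le (le_self_add.trans hmn)).sub
    (((hu.partialX (m := m + 1) (by rwa [add_assoc, one_add_one_eq_two])).partialX le_rfl))

end Regularity

section Periodicity

variable {b T : ℝ} {u w : ℝ → ℝ → ℝ}

theorem f2Flux_add_period (hu : ∀ x t, u (x + T) t = u x t) (hw : ∀ x t, w (x + T) t = w x t)
    (x t : ℝ) : f2Flux b u w (x + T) t = f2Flux b u w x t := by
  simp only [f2Flux, hu, hw, partialX_add_period hw]

theorem momField_add_period (hu : ∀ x t, u (x + T) t = u x t) (x t : ℝ) :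
    momField u (x + T) t = momField u x t := by
  simp only [momField, hu]
  exact congrArg (u x t - ·) (partialX_add_period (partialX_add_period hu) x t)

end Periodicity

theorem f2Density_rpow {b : ℝ} {m : ℝ → ℝ → ℝ} {x t : ℝ} (hb : b ≠ 0)
    (hm : DifferentiableAt ℝ (uncurry m) (x, t)) (hm0 : 0 < m x t) :
    f2Density (fun x t => m x t ^ (-(1 / b))) x t
      = (partialX m x t ^ 2 / (b ^ 2 * m x t ^ 2) + 1) * m x t ^ (-(1 / b)) := by
  rw [f2Density, partialX, ((hasDerivAt_partialX hm).rpow_const (.inl hm0.ne')).deriv,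
    rpow_sub_one hm0.ne']
  field_simp

theorem stmt12_general (b T : ℝ) (hb : 1 < b) (u : ℝ → ℝ → ℝ)
    (hu : ContDiff ℝ (⊤ : ℕ∞) (Function.uncurry u))
    (hper : ∀ x t : ℝ, u (x + T) t = u x t)
    (hpos : ∀ x t : ℝ, 0 < momField u x t)
    (heq : ∀ x t : ℝ,
      deriv (fun s => momField u x s) t
        + u x t * deriv (fun y => momField u y t) x
        + b * momField u x t * deriv (fun y => u y t) x = 0) :
    ∃ k : ℝ, ∀ t : ℝ,
      (∫ x in (0:ℝ)..T,
        ((deriv (fun y => momField u y t) x) ^ 2 / (b ^ 2 * (momField u x t) ^ 2) + 1)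
          * (momField u x t) ^ (-(1 / b))) = k := by
  set w : ℝ → ℝ → ℝ := fun x t => momField u x t ^ (-(1 / b))
  have hb0 : b ≠ 0 := (zero_lt_one.trans hb).ne'
  have hm : ContDiff ℝ ∞ (uncurry (momField u)) :=
    hu.momField (m := ∞) (WithTop.coe_le_coe.2 le_top)
  have hw : ContDiff ℝ ∞ (uncurry w) := hm.rpow_const_of_ne fun p => (hpos p.1 p.2).ne'
  have hw0 : ∀ x t, w x t ≠ 0 := fun x t => (rpow_pos_of_pos (hpos x t) _).ne'
  have hwb : ∀ x t, w x t ^ (-b) = momField u x t := fun x t => by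
    rw [← rpow_mul (hpos x t).le, neg_mul_neg, one_div_mul_cancel hb0, rpow_one]
  have hwMomentum : SolvesBFamilyEq (-1) u w := by
    have h := SolvesBFamilyEq.rpow heq (hm.differentiable (by simp))
      (fun x t => (hpos x t).ne') (-(1 / b))
    rwa [neg_mul, one_div_mul_cancel hb0] at h
  have hcons : partialT (f2Density w) = partialX (f2Flux b u w) :=
    partialT_f2Density_eq_partialX_f2Flux hb.ne' (contDiff_infty.1 hu 2) (contDiff_infty.1 hw 2)
      hw0 hwMomentum fun x t => by rw [hwb]; exact (sub_sub_cancel _ _).symm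
  have hwper : ∀ x t, w (x + T) t = w x t := fun x t => by
    simp only [w, momField_add_period hper]
  obtain ⟨k, hk⟩ := exists_intervalIntegral_eq_of_partialT_eq_partialX
    (hw.f2Density (m := 1) (WithTop.coe_le_coe.2 le_top) hw0)
    ((contDiff_infty.1 hu 1).f2Flux hw (WithTop.coe_le_coe.2 le_top) hw0)
    hcons fun t => by simpa using (f2Flux_add_period hper hwper 0 t).symm
  refine ⟨k, fun t => ?_⟩
  rw [← hk t]
  refine intervalIntegral.integral_congr fun x _ => ?_
  exact (f2Density_rpow hb0 (hm.differentiable (by simp) _) (hpos x t)).symm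

/-- Conservation of `F₂(m) = ∫₀ᵀ (m_x²/(b²m²) + 1) m^(-1/b) dx` along the b-family
Camassa–Holm flow in momentum-density form `m_t + u m_x + b m u_x = 0`, for `u`
smooth, `T`-periodic in `x`, with strictly positive momentum density. -/
theorem stmt12 (b T : ℝ) (hb : 1 < b) (hT : 0 < T) (u : ℝ → ℝ → ℝ)
    (hu : ContDiff ℝ (⊤ : ℕ∞) (Function.uncurry u))
    (hper : ∀ x t : ℝ, u (x + T) t = u x t)
    (hpos : ∀ x t : ℝ, 0 < momField u x t)
    (heq : ∀ x t : ℝ,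
      deriv (fun s => momField u x s) t
        + u x t * deriv (fun y => momField u y t) x
        + b * momField u x t * deriv (fun y => u y t) x = 0) :
    ∃ k : ℝ, ∀ t : ℝ,
      (∫ x in (0:ℝ)..T,
        ((deriv (fun y => momField u y t) x) ^ 2 / (b ^ 2 * (momField u x t) ^ 2) + 1)
          * (momField u x t) ^ (-(1 / b))) = k :=
  stmt12_general b T hb u hu hper hpos heq
end

section
/- Let H be a complex Hilbert space, let L : H → H be a continuous self-adjoint linear operator, and let S : H → H be a continuous linear operator with continuous inverse. Set A = S ∘ L ∘ S*, where S* is the Hilbert-space adjoint of S. Then L and A have the same inertia: (i) for every n ∈ ℕ, there exists an n-dimensional subspace W of H with Re⟨Lx, x⟩ < 0 for all nonzero x ∈ W if and only if there exists an n-dimensional subspace W' with Re⟨Ax, x⟩ < 0 for all nonzero x ∈ W'; (ii) the same equivalence holds with < 0 replaced by > 0; and (iii) the kernels of L and A have the same dimension. -/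
/-!
For `A = S L S†` one has `⟪A x, x⟫ = ⟪L (S† x), S† x⟫`, and `S†` is a linear isomorphism with
inverse `S'†`. Hence `S'†` carries every `L`-definite subspace onto an `A`-definite subspace of the
same dimension, the identity `L = S' A S'†` gives the converse, and `ker A` is the preimage of
`ker L` under `S†`.
-/

open ContinuousLinearMap

section Congruence

variable {𝕜 H : Type*} [RCLike 𝕜] [NormedAddCommGroup H] [InnerProductSpace 𝕜 H] [CompleteSpace H]

def ExistsDefiniteSubspace (P : ℝ → Prop) (L : H →L[𝕜] H) (n : ℕ) : Prop :=
  ∃ W : Submodule 𝕜 H, Module.finrank 𝕜 W = n ∧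
    ∀ x ∈ W, x ≠ 0 → P (RCLike.re (inner 𝕜 (L x) x))

lemma adjoint_apply_adjoint_apply_of_comp_eq_id {S S' : H →L[𝕜] H}
    (h : S' ∘L S = ContinuousLinearMap.id 𝕜 H) (x : H) : adjoint S (adjoint S' x) = x := by
  rw [← comp_apply, ← adjoint_comp, h, adjoint_id, id_apply]

lemma inner_conj_apply_self (L S : H →L[𝕜] H) (x : H) :
    inner 𝕜 ((S ∘L L ∘L adjoint S) x) x = inner 𝕜 (L (adjoint S x)) (adjoint S x) :=
  (adjoint_inner_right S _ x).symm

lemma conj_conj_eq_self {S S' : H →L[𝕜] H} (h : S' ∘L S = ContinuousLinearMap.id 𝕜 H)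
    (L : H →L[𝕜] H) :
    S' ∘L (S ∘L L ∘L adjoint S) ∘L adjoint S' = L := by
  ext x
  simp only [comp_apply, adjoint_apply_adjoint_apply_of_comp_eq_id h]
  rw [← comp_apply S', h, id_apply]

variable {P : ℝ → Prop} {L : H →L[𝕜] H} {n : ℕ}

lemma ExistsDefiniteSubspace.conj {S S' : H →L[𝕜] H} (hS : S' ∘L S = ContinuousLinearMap.id 𝕜 H)
    (h : ExistsDefiniteSubspace P L n) : ExistsDefiniteSubspace P (S ∘L L ∘L adjoint S) n := by
  obtain ⟨W, hWn, hW⟩ := h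
  have hinv := adjoint_apply_adjoint_apply_of_comp_eq_id hS
  have hinj : Function.Injective (adjoint S') := Function.LeftInverse.injective hinv
  refine ⟨W.map (adjoint S' : H →ₗ[𝕜] H), ?_, ?_⟩
  · rw [← hWn]
    exact (Submodule.equivMapOfInjective _ hinj W).finrank_eq.symm
  · rintro _ ⟨w, hw, rfl⟩ hx
    rw [coe_coe, inner_conj_apply_self, hinv]
    exact hW w hw (by rintro rfl; exact hx (map_zero _))

lemma existsDefiniteSubspace_conj_iff {S S' : H →L[𝕜] H}
    (h₁ : S' ∘L S = ContinuousLinearMap.id 𝕜 H) (h₂ : S ∘L S' = ContinuousLinearMap.id 𝕜 H) :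
    ExistsDefiniteSubspace P (S ∘L L ∘L adjoint S) n ↔ ExistsDefiniteSubspace P L n :=
  ⟨fun h => conj_conj_eq_self h₁ L ▸ h.conj h₂, fun h => h.conj h₁⟩

lemma ker_conj_eq_comap {S S' : H →L[𝕜] H} (hS : S' ∘L S = ContinuousLinearMap.id 𝕜 H)
    (L : H →L[𝕜] H) :
    LinearMap.ker ((S ∘L L ∘L adjoint S : H →L[𝕜] H) : H →ₗ[𝕜] H) =
      (LinearMap.ker (L : H →ₗ[𝕜] H)).comap (adjoint S : H →ₗ[𝕜] H) := by
  have hinj : Function.Injective S := Function.LeftInverse.injective (g := S') fun x => by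
    rw [← comp_apply S', hS, id_apply]
  ext x
  simp only [LinearMap.mem_ker, Submodule.mem_comap, coe_coe, comp_apply]
  exact hinj.eq_iff' (map_zero S)

lemma rank_ker_conj {S S' : H →L[𝕜] H} (h₁ : S' ∘L S = ContinuousLinearMap.id 𝕜 H)
    (h₂ : S ∘L S' = ContinuousLinearMap.id 𝕜 H) (L : H →L[𝕜] H) :
    Module.rank 𝕜 (LinearMap.ker ((S ∘L L ∘L adjoint S : H →L[𝕜] H) : H →ₗ[𝕜] H)) =
      Module.rank 𝕜 (LinearMap.ker (L : H →ₗ[𝕜] H)) := by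
  let e : H ≃ₗ[𝕜] H := ContinuousLinearEquiv.equivOfInverse (adjoint S) (adjoint S')
    (adjoint_apply_adjoint_apply_of_comp_eq_id h₂) (adjoint_apply_adjoint_apply_of_comp_eq_id h₁)
  rw [ker_conj_eq_comap h₁]
  exact (Submodule.comap_equiv_eq_map_symm e _).symm ▸ e.symm.rank_map_eq _

end Congruence

theorem stmt13_general {H : Type*} [NormedAddCommGroup H] [InnerProductSpace ℂ H]
    [CompleteSpace H] (L S S' : H →L[ℂ] H)
    (hS'₁ : S' ∘L S = ContinuousLinearMap.id ℂ H)
    (hS'₂ : S ∘L S' = ContinuousLinearMap.id ℂ H) :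
    (∀ n : ℕ,
      (∃ W : Submodule ℂ H, Module.finrank ℂ W = n ∧
        ∀ x ∈ W, x ≠ 0 → (inner ℂ (L x) x : ℂ).re < 0) ↔
      (∃ W : Submodule ℂ H, Module.finrank ℂ W = n ∧
        ∀ x ∈ W, x ≠ 0 →
          (inner ℂ ((S ∘L L ∘L ContinuousLinearMap.adjoint S) x) x : ℂ).re < 0)) ∧
    (∀ n : ℕ,
      (∃ W : Submodule ℂ H, Module.finrank ℂ W = n ∧
        ∀ x ∈ W, x ≠ 0 → 0 < (inner ℂ (L x) x : ℂ).re) ↔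
      (∃ W : Submodule ℂ H, Module.finrank ℂ W = n ∧
        ∀ x ∈ W, x ≠ 0 →
          0 < (inner ℂ ((S ∘L L ∘L ContinuousLinearMap.adjoint S) x) x : ℂ).re)) ∧
    Module.rank ℂ (LinearMap.ker (L : H →ₗ[ℂ] H))
      = Module.rank ℂ (LinearMap.ker ((S ∘L L ∘L ContinuousLinearMap.adjoint S : H →L[ℂ] H) : H →ₗ[ℂ] H)) :=
  ⟨fun _ => (existsDefiniteSubspace_conj_iff (P := (· < 0)) hS'₁ hS'₂).symm,
    fun _ => (existsDefiniteSubspace_conj_iff (P := (0 < ·)) hS'₁ hS'₂).symm,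
    (rank_ker_conj hS'₁ hS'₂ L).symm⟩

/-- Sylvester's inertia law for self-adjoint operators on a complex Hilbert space:
if `S` is boundedly invertible, then `L` and `A = S L S*` have the same number of
negative directions, the same number of positive directions, and kernels of the
same dimension. -/
theorem stmt13 {H : Type*} [NormedAddCommGroup H] [InnerProductSpace ℂ H]
    [CompleteSpace H] (L S S' : H →L[ℂ] H) (hL : IsSelfAdjoint L)
    (hS'₁ : S' ∘L S = ContinuousLinearMap.id ℂ H)
    (hS'₂ : S ∘L S' = ContinuousLinearMap.id ℂ H) :
    (∀ n : ℕ,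
      (∃ W : Submodule ℂ H, Module.finrank ℂ W = n ∧
        ∀ x ∈ W, x ≠ 0 → (inner ℂ (L x) x : ℂ).re < 0) ↔
      (∃ W : Submodule ℂ H, Module.finrank ℂ W = n ∧
        ∀ x ∈ W, x ≠ 0 →
          (inner ℂ ((S ∘L L ∘L ContinuousLinearMap.adjoint S) x) x : ℂ).re < 0)) ∧
    (∀ n : ℕ,
      (∃ W : Submodule ℂ H, Module.finrank ℂ W = n ∧
        ∀ x ∈ W, x ≠ 0 → 0 < (inner ℂ (L x) x : ℂ).re) ↔
      (∃ W : Submodule ℂ H, Module.finrank ℂ W = n ∧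
        ∀ x ∈ W, x ≠ 0 →
          0 < (inner ℂ ((S ∘L L ∘L ContinuousLinearMap.adjoint S) x) x : ℂ).re)) ∧
    Module.rank ℂ (LinearMap.ker (L : H →ₗ[ℂ] H))
      = Module.rank ℂ (LinearMap.ker ((S ∘L L ∘L ContinuousLinearMap.adjoint S : H →L[ℂ] H) : H →ₗ[ℂ] H)) :=
  stmt13_general L S S' hS'₁ hS'₂
end

section
/- Let H be a real Hilbert space and L : H → H a continuous self-adjoint linear operator. Suppose there are nonzero vectors χ, k ∈ H with ⟨χ, k⟩ = 0, a real λ > 0 with Lχ = −λχ, Lk = 0, and a δ > 0 such that ⟨Lp, p⟩ ≥ δ‖p‖² for every p ∈ H orthogonal to both χ and k. Suppose further there exists ψ ∈ H with ⟨Lψ, ψ⟩ < 0. Then there exists a constant C > 0 such that ⟨Lm, m⟩ ≥ C‖m‖² for every m ∈ H satisfying ⟨m, k⟩ = 0 and ⟨Lψ, m⟩ = 0. -/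
/-!
Split `m = a χ + p` with `p ⊥ χ, k`, and likewise `ψ = α χ + q` once its `k`-component (which `L`
kills) is discarded. The form `Q x = ⟪L x, x⟫` is then `-λ a² ‖χ‖² + Q p`, and the constraint
`⟪L ψ, m⟫ = 0` reads `λ α a ‖χ‖² = ⟪L q, p⟫`. Since `Q` is nonnegative on `{χ, k}ᗮ`, Cauchy–Schwarz
for `Q` bounds the negative part by `λ a² ‖χ‖² ≤ θ Q p` with `θ = Q q / (λ α² ‖χ‖²)`, and `θ < 1`
is exactly `Q ψ < 0`. Hence `Q m ≥ (1 - θ) Q p`, while `Q p` dominates both `δ ‖p‖²` and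
`λ a² ‖χ‖²`, whose sum controls `‖m‖²`.
-/

open scoped RealInnerProductSpace

section

variable {H : Type*} [NormedAddCommGroup H] [InnerProductSpace ℝ H]

theorem exists_smul_add_inner_eq_zero (v x : H) :
    ∃ (a : ℝ) (p : H), ⟪p, v⟫ = 0 ∧ x = a • v + p := by
  obtain ⟨y, hy, p, hp, rfl⟩ := (ℝ ∙ v).exists_add_mem_mem_orthogonal x
  obtain ⟨a, rfl⟩ := Submodule.mem_span_singleton.mp hy
  exact ⟨a, p, Submodule.mem_orthogonal_singleton_iff_inner_left.mp hp, rfl⟩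

theorem exists_smul_add_mem_orthogonal_inf {χ k x : H} (hχk : ⟪χ, k⟫ = 0) (hx : ⟪x, k⟫ = 0) :
    ∃ a : ℝ, ∃ p ∈ (ℝ ∙ χ)ᗮ ⊓ (ℝ ∙ k)ᗮ, x = a • χ + p := by
  obtain ⟨a, p, hpχ, rfl⟩ := exists_smul_add_inner_eq_zero χ x
  refine ⟨a, p, ⟨Submodule.mem_orthogonal_singleton_iff_inner_left.mpr hpχ,
    Submodule.mem_orthogonal_singleton_iff_inner_left.mpr ?_⟩, rfl⟩
  rwa [inner_add_left, real_inner_smul_left, hχk, mul_zero, zero_add] at hx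

namespace LinearMap.IsSymmetric

variable {T : H →ₗ[ℝ] H}

theorem exists_inner_eq_zero_map_eq_of_map_eq_zero (hT : T.IsSymmetric) {k : H} (hk : T k = 0)
    (ψ : H) : ∃ ψ₁ : H, ⟪ψ₁, k⟫ = 0 ∧ T ψ₁ = T ψ ∧ ⟪T ψ₁, ψ₁⟫ = ⟪T ψ, ψ⟫ := by
  obtain ⟨b, ψ₁, hψ₁, rfl⟩ := exists_smul_add_inner_eq_zero k ψ
  have hTψ₁ : T (b • k + ψ₁) = T ψ₁ := by simp [hk]
  refine ⟨ψ₁, hψ₁, hTψ₁.symm, ?_⟩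
  rw [hTψ₁, inner_add_right, real_inner_smul_right, hT ψ₁ k, hk, inner_zero_right, mul_zero,
    zero_add]

theorem inner_map_smul_add_smul_add (hT : T.IsSymmetric) {μ : ℝ} {χ : H} (hχ : T χ = μ • χ)
    {p q : H} (hp : ⟪p, χ⟫ = 0) (hq : ⟪q, χ⟫ = 0) (a b : ℝ) :
    ⟪T (a • χ + p), b • χ + q⟫ = μ * a * b * ‖χ‖ ^ 2 + ⟪T p, q⟫ := by
  have hTp : ⟪T p, χ⟫ = 0 := by rw [hT, hχ, real_inner_smul_right, hp, mul_zero]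
  have hχq : ⟪χ, q⟫ = 0 := by rw [real_inner_comm, hq]
  simp only [map_add, map_smul, hχ, inner_add_left, inner_add_right, real_inner_smul_left,
    real_inner_smul_right, real_inner_self_eq_norm_sq, hχq, hTp]
  ring

theorem inner_map_sq_le_of_nonneg (hT : T.IsSymmetric) {V : Submodule ℝ H}
    (hV : ∀ p ∈ V, 0 ≤ ⟪T p, p⟫) {p q : H} (hp : p ∈ V) (hq : q ∈ V) :
    ⟪T q, p⟫ ^ 2 ≤ ⟪T q, q⟫ * ⟪T p, p⟫ := by
  have hquad : ∀ t : ℝ, 0 ≤ ⟪T q, q⟫ * (t * t) + (2 * ⟪T q, p⟫) * t + ⟪T p, p⟫ := by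
    intro t
    have hpq : ⟪T p, q⟫ = ⟪T q, p⟫ := by rw [hT, real_inner_comm]
    have h := hV (p + t • q) (V.add_mem hp (V.smul_mem t hq))
    simp only [map_add, map_smul, inner_add_left, inner_add_right, real_inner_smul_left,
      real_inner_smul_right, hpq] at h
    linarith
  have h := discrim_le_zero hquad
  rw [discrim] at h
  linarith

theorem exists_coercive_of_inner_map_neg (hT : T.IsSymmetric) {χ : H} {lam δ : ℝ}
    (hχ : T χ = -lam • χ) (hlam : 0 < lam) (hδ : 0 < δ) {V : Submodule ℝ H}
    (hVχ : V ≤ (ℝ ∙ χ)ᗮ) (hgap : ∀ p ∈ V, δ * ‖p‖ ^ 2 ≤ ⟪T p, p⟫) {α : ℝ} {q : H} (hq : q ∈ V)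
    (hψ : ⟪T (α • χ + q), α • χ + q⟫ < 0) :
    ∃ C > 0, ∀ a : ℝ, ∀ p ∈ V, ⟪T (α • χ + q), a • χ + p⟫ = 0 →
      C * ‖a • χ + p‖ ^ 2 ≤ ⟪T (a • χ + p), a • χ + p⟫ := by
  have hV : ∀ p ∈ V, 0 ≤ ⟪T p, p⟫ := fun p hp => le_trans (by positivity) (hgap p hp)
  have horth : ∀ p ∈ V, ⟪p, χ⟫ = 0 := fun p hp =>
    Submodule.mem_orthogonal_singleton_iff_inner_left.mp (hVχ hp)
  set n := ‖χ‖ ^ 2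
  set A := lam * α ^ 2 * n
  set θ := ⟪T q, q⟫ / A
  have hqA : ⟪T q, q⟫ < A := by
    rw [hT.inner_map_smul_add_smul_add hχ (horth q hq) (horth q hq)] at hψ
    linarith
  have hA : 0 < A := (hV q hq).trans_lt hqA
  have hθ1 : θ < 1 := (div_lt_one hA).2 hqA
  refine ⟨(1 - θ) * min δ lam / 2, by have := lt_min hδ hlam; positivity, fun a p hp hm => ?_⟩
  rw [hT.inner_map_smul_add_smul_add hχ (horth q hq) (horth p hp)] at hm
  rw [hT.inner_map_smul_add_smul_add hχ (horth p hp) (horth p hp)]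
  have hneg : lam * a ^ 2 * n ≤ θ * ⟪T p, p⟫ := by
    rw [div_mul_eq_mul_div, le_div_iff₀ hA]
    calc lam * a ^ 2 * n * A = (lam * α * a * n) ^ 2 := by ring
      _ = ⟪T q, p⟫ ^ 2 := by congr 1; linarith
      _ ≤ ⟪T q, q⟫ * ⟪T p, p⟫ := hT.inner_map_sq_le_of_nonneg hV hp hq
  have hnorm : ‖a • χ + p‖ ^ 2 = a ^ 2 * n + ‖p‖ ^ 2 := by
    rw [norm_add_sq_real, real_inner_smul_left, real_inner_comm, horth p hp, norm_smul, mul_pow,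
      Real.norm_eq_abs, sq_abs]
    ring
  have hmin : min δ lam * ‖a • χ + p‖ ^ 2 ≤ 2 * ⟪T p, p⟫ := by
    have hθB : θ * ⟪T p, p⟫ ≤ ⟪T p, p⟫ := mul_le_of_le_one_left (hV p hp) hθ1.le
    calc min δ lam * ‖a • χ + p‖ ^ 2 = min δ lam * (a ^ 2 * n) + min δ lam * ‖p‖ ^ 2 := by
          rw [hnorm]; ring
      _ ≤ lam * (a ^ 2 * n) + δ * ‖p‖ ^ 2 := by
          gcongr
          exacts [min_le_right _ _, min_le_left _ _]
      _ ≤ 2 * ⟪T p, p⟫ := by linarith [hgap p hp]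
  calc (1 - θ) * min δ lam / 2 * ‖a • χ + p‖ ^ 2 ≤ (1 - θ) * ⟪T p, p⟫ := by
        rw [mul_div_assoc, mul_assoc]
        gcongr
        linarith
    _ ≤ -lam * a * a * n + ⟪T p, p⟫ := by linarith

end LinearMap.IsSymmetric

end

theorem stmt14_general {H : Type*} [NormedAddCommGroup H] [InnerProductSpace ℝ H]
    [CompleteSpace H] (L : H →L[ℝ] H) (hL : IsSelfAdjoint L)
    (χ k : H) (hortho : ⟪χ, k⟫ = 0)
    (lam : ℝ) (hlam : 0 < lam) (hχeig : L χ = -lam • χ) (hk0 : L k = 0)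
    (δ : ℝ) (hδ : 0 < δ)
    (hgap : ∀ p : H, ⟪p, χ⟫ = 0 → ⟪p, k⟫ = 0 → ⟪L p, p⟫ ≥ δ * ‖p‖ ^ 2)
    (ψ : H) (hψ : ⟪L ψ, ψ⟫ < 0) :
    ∃ C > (0 : ℝ), ∀ m : H, ⟪m, k⟫ = 0 → ⟪L ψ, m⟫ = 0 →
      ⟪L m, m⟫ ≥ C * ‖m‖ ^ 2 := by
  have hT : (L : H →ₗ[ℝ] H).IsSymmetric := hL.isSymmetric
  obtain ⟨ψ₁, hψ₁k, hLψ₁, hQψ₁⟩ := hT.exists_inner_eq_zero_map_eq_of_map_eq_zero hk0 ψ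
  obtain ⟨α, q, hq, rfl⟩ := exists_smul_add_mem_orthogonal_inf hortho hψ₁k
  have hgapV : ∀ p ∈ (ℝ ∙ χ)ᗮ ⊓ (ℝ ∙ k)ᗮ, δ * ‖p‖ ^ 2 ≤ ⟪L p, p⟫ := fun p ⟨hpχ, hpk⟩ =>
    hgap p (Submodule.mem_orthogonal_singleton_iff_inner_left.mp hpχ)
      (Submodule.mem_orthogonal_singleton_iff_inner_left.mp hpk)
  obtain ⟨C, hC, hcoercive⟩ := hT.exists_coercive_of_inner_map_neg hχeig hlam hδ inf_le_left hgapV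
    hq (hQψ₁.trans_lt hψ)
  refine ⟨C, hC, fun m hmk hm => ?_⟩
  obtain ⟨a, p, hp, rfl⟩ := exists_smul_add_mem_orthogonal_inf hortho hmk
  exact hcoercive a p hp (hLψ₁ ▸ hm)

/-- Abstract coercivity principle: a self-adjoint operator `L` on a real Hilbert
space with one negative direction `χ` (eigenvalue `-λ`), one null direction `k`,
a positive gap `δ` on the orthogonal complement of `χ` and `k`, and a vector `ψ`
with `⟨Lψ, ψ⟩ < 0`, is uniformly coercive on `{m : ⟨m, k⟩ = 0, ⟨Lψ, m⟩ = 0}`. -/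
theorem stmt14 {H : Type*} [NormedAddCommGroup H] [InnerProductSpace ℝ H]
    [CompleteSpace H] (L : H →L[ℝ] H) (hL : IsSelfAdjoint L)
    (χ k : H) (hχ : χ ≠ 0) (hk : k ≠ 0) (hortho : ⟪χ, k⟫ = 0)
    (lam : ℝ) (hlam : 0 < lam) (hχeig : L χ = -lam • χ) (hk0 : L k = 0)
    (δ : ℝ) (hδ : 0 < δ)
    (hgap : ∀ p : H, ⟪p, χ⟫ = 0 → ⟪p, k⟫ = 0 → ⟪L p, p⟫ ≥ δ * ‖p‖ ^ 2)
    (ψ : H) (hψ : ⟪L ψ, ψ⟫ < 0) :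
    ∃ C > (0 : ℝ), ∀ m : H, ⟪m, k⟫ = 0 → ⟪L ψ, m⟫ = 0 →
      ⟪L m, m⟫ ≥ C * ‖m‖ ^ 2 :=
  stmt14_general L hL χ k hortho lam hlam hχeig hk0 δ hδ hgap ψ hψ
end
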